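/- VIG-based non-interaction implies non-interaction: Let f : (ℤ₂)ⁿ → ℝ with Walsh transform f̂. If h₁, h₂ ∈ (ℤ₂)ⁿ are such that for every λ with f̂(λ) ≠ 0, either ones(λ) ∩ ones(h₁) = ∅ or ones(λ) ∩ ones(h₂) = ∅, then h₁ and h₂ are non-interacting for f: f(x + h₁ + h₂) − f(x) = (f(x+h₁) − f(x)) + (f(x+h₂) − f(x)) for all x ∈ (ℤ₂)ⁿ. -/

import Mathlib

/-- Walsh (Fourier) transform of `f : (ℤ₂)ⁿ → ℝ`. -/
def walshTransform {n : ℕ} (f : (Fin n → ZMod 2) → ℝ) (lam : Fin n → ZMod 2) : ℝ :=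
  ∑ x : Fin n → ZMod 2, f x * ∏ i : Fin n, (-1 : ℝ) ^ ((lam i).val * (x i).val)

/-- The set of positions where a binary string is 1. -/
def ones {n : ℕ} (v : Fin n → ZMod 2) : Finset (Fin n) :=
  Finset.univ.filter (fun i => v i = 1)

/-!
Since each `φ_λ` is a character of `(ℤ₂)ⁿ`, Walsh inversion writes `2ⁿ` times the second difference
`f(x + h₁ + h₂) - f(x + h₁) - f(x + h₂) + f(x)` as `∑_λ f̂(λ) φ_λ(x) (φ_λ(h₁) - 1) (φ_λ(h₂) - 1)`.
If `f̂(λ) ≠ 0`, then `λ` meets the support of `h₁` or of `h₂` nowhere, so `φ_λ(h₁) = 1` or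
`φ_λ(h₂) = 1` and the term vanishes.
-/

open Finset

lemma ZMod.neg_one_pow_val_mul_val_add {R : Type*} [Ring R] (a b c : ZMod 2) :
    (-1 : R) ^ (a.val * (b + c).val) = (-1) ^ (a.val * b.val) * (-1) ^ (a.val * c.val) := by
  rw [← pow_add, ← mul_add, neg_one_pow_eq_pow_mod_two, ZMod.val_add, Nat.mul_mod_mod,
    ← neg_one_pow_eq_pow_mod_two]

lemma ZMod.sum_neg_one_pow_val_mul_val {R : Type*} [Ring R] (c : ZMod 2) :
    ∑ b : ZMod 2, (-1 : R) ^ (b.val * c.val) = if c = 0 then 2 else 0 := by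
  rw [show (univ : Finset (ZMod 2)) = {0, 1} from rfl, sum_pair zero_ne_one]
  obtain rfl | rfl : c = 0 ∨ c = 1 := by decide +revert
  all_goals norm_num [ZMod.val_one]

section Walsh

variable {ι : Type*} [Fintype ι]

noncomputable def walsh (lam x : ι → ZMod 2) : ℝ :=
  ∏ i, (-1 : ℝ) ^ ((lam i).val * (x i).val)

lemma walsh_add (lam x y : ι → ZMod 2) : walsh lam (x + y) = walsh lam x * walsh lam y := by
  simp only [walsh, ← prod_mul_distrib, Pi.add_apply, ZMod.neg_one_pow_val_mul_val_add]

lemma walsh_eq_one_of_mul_eq_zero {lam x : ι → ZMod 2} (h : lam * x = 0) : walsh lam x = 1 := by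
  refine prod_eq_one fun i _ => ?_
  have hi : lam i * x i = 0 := congrFun h i
  rcases mul_eq_zero.mp hi with h0 | h0 <;> simp [h0]

lemma sum_walsh [DecidableEq ι] (z : ι → ZMod 2) :
    ∑ lam, walsh lam z = if z = 0 then 2 ^ Fintype.card ι else 0 := by
  simp only [walsh]
  rw [← Fintype.prod_sum fun i (b : ZMod 2) => (-1 : ℝ) ^ (b.val * (z i).val)]
  simp only [ZMod.sum_neg_one_pow_val_mul_val, Fintype.prod_ite_zero, funext_iff, Pi.zero_apply,
    prod_const, card_univ]

lemma walsh_second_difference (lam x h₁ h₂ : ι → ZMod 2) :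
    walsh lam (x + h₁ + h₂) - walsh lam (x + h₁) - walsh lam (x + h₂) + walsh lam x =
      walsh lam x * (walsh lam h₁ - 1) * (walsh lam h₂ - 1) := by
  simp only [walsh_add]
  ring

end Walsh

lemma walshTransform_eq_sum_mul_walsh {n : ℕ} (f : (Fin n → ZMod 2) → ℝ) (lam : Fin n → ZMod 2) :
    walshTransform f lam = ∑ x, f x * walsh lam x := rfl

theorem sum_walshTransform_mul_walsh {n : ℕ} (f : (Fin n → ZMod 2) → ℝ) (x : Fin n → ZMod 2) :
    ∑ lam, walshTransform f lam * walsh lam x = 2 ^ n * f x := by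
  have hself (y : Fin n → ZMod 2) : y + x = 0 ↔ y = x := by
    rw [add_eq_zero_iff_eq_neg, show -x = x from funext fun i => ZMod.neg_eq_self_mod_two _]
  calc ∑ lam, walshTransform f lam * walsh lam x
      = ∑ y, f y * ∑ lam, walsh lam (y + x) := by
        simp only [walshTransform_eq_sum_mul_walsh, sum_mul, mul_sum, walsh_add, mul_assoc]
        exact sum_comm
    _ = 2 ^ n * f x := by
        simp only [sum_walsh, hself, Fintype.card_fin, mul_ite, mul_zero, sum_ite_eq', mem_univ,
          if_true, mul_comm]

lemma mul_eq_zero_of_ones_inter_eq_empty {n : ℕ} {lam x : Fin n → ZMod 2}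
    (h : ones lam ∩ ones x = ∅) : lam * x = 0 := by
  have hZMod : ∀ a b : ZMod 2, ¬(a = 1 ∧ b = 1) → a * b = 0 := by decide
  funext i
  refine hZMod _ _ fun hi => ?_
  simpa [ones, hi] using Finset.ext_iff.mp h i

theorem stmt_12 {n : ℕ} (f : (Fin n → ZMod 2) → ℝ) (h₁ h₂ : Fin n → ZMod 2)
    (hvig : ∀ lam : Fin n → ZMod 2, walshTransform f lam ≠ 0 →
      ones lam ∩ ones h₁ = ∅ ∨ ones lam ∩ ones h₂ = ∅) :
    ∀ x : Fin n → ZMod 2,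
      f (x + h₁ + h₂) - f x = (f (x + h₁) - f x) + (f (x + h₂) - f x) := by
  intro x
  have hterm (lam : Fin n → ZMod 2) : walshTransform f lam * (walsh lam (x + h₁ + h₂) -
      walsh lam (x + h₁) - walsh lam (x + h₂) + walsh lam x) = 0 := by
    by_cases hW : walshTransform f lam = 0
    · rw [hW, zero_mul]
    rw [walsh_second_difference]
    rcases hvig lam hW with h | h <;>
      simp [walsh_eq_one_of_mul_eq_zero (mul_eq_zero_of_ones_inter_eq_empty h)]
  have hsum : (2 : ℝ) ^ n * (f (x + h₁ + h₂) - f (x + h₁) - f (x + h₂) + f x) = 0 := by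
    rw [← Fintype.sum_eq_zero _ hterm]
    simp only [mul_add, mul_sub, sum_add_distrib, sum_sub_distrib, sum_walshTransform_mul_walsh]
  have := (mul_eq_zero.mp hsum).resolve_left (by positivity)
  linarith
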